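/- (Completeness of the MDI characterization of quantum memories) Let N be a quantum channel from ℂ^{d_A} to ℂ^{d_B} with Kraus operators {K_l} and normalized Choi state J_N on ℂ^{d_A}⊗ℂ^{d_B}, and let {V_i}_{i=0}^{d_B²−1} be an orthogonal unitary basis of M_{d_B}(ℂ). For density matrices τ on ℂ^{d_A} and ω on ℂ^{d_B}, define P(i | τ, ω) = tr[(I⊗V_i) Φ₊ (I⊗V_i)† · (N(τ) ⊗ ω)], where Φ₊ is the maximally entangled state on ℂ^{d_B}⊗ℂ^{d_B}. Then (i) P(i | τ, ω) = (d_A/d_B) · tr[J_N · (τ^T ⊗ (V_i† ω V_i)^T)] for every i; and (ii) if W is a Hermitian matrix on ℂ^{d_A}⊗ℂ^{d_B} and β^{i}_{s,t} are real coefficients with density matrices τ_s on ℂ^{d_A} and ω_t on ℂ^{d_B} such that W = Σ_{s,t} β^{i}_{s,t} · τ_s^T ⊗ (V_i† ω_t V_i)^T for EVERY i, then Σ_{i,s,t} β^{i}_{s,t} P(i | τ_s, ω_t) = d_A d_B · tr(W J_N). -/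
import Mathlib


open Matrix BigOperators
open scoped ComplexOrder Kronecker

noncomputable section

/-- A density matrix: positive semidefinite with trace one. -/
def IsDensity {ι : Type*} [Fintype ι] (ρ : Matrix ι ι ℂ) : Prop :=
  ρ.PosSemidef ∧ ρ.trace = 1

/-- The maximally entangled state `Φ₊ = (1/d) Σ_{j,k} |jj⟩⟨kk|` on `ℂ^d ⊗ ℂ^d`. -/
def maxEnt (d : ℕ) : Matrix (Fin d × Fin d) (Fin d × Fin d) ℂ :=
  fun p q => if p.1 = p.2 ∧ q.1 = q.2 then (d : ℂ)⁻¹ else 0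

/-- The generalized Bell projector `(I ⊗ V) Φ₊ (I ⊗ V)†` associated with a unitary `V`. -/
def bellProj {d : ℕ} (V : Matrix (Fin d) (Fin d) ℂ) :
    Matrix (Fin d × Fin d) (Fin d × Fin d) ℂ :=
  ((1 : Matrix (Fin d) (Fin d) ℂ) ⊗ₖ V) * maxEnt d *
    ((1 : Matrix (Fin d) (Fin d) ℂ) ⊗ₖ V)ᴴ

/-- The normalized Choi state `J_N = Σ_l (I ⊗ K_l) Φ₊ (I ⊗ K_l)†` of a channel with
Kraus operators `{K_l}`. -/
def choiState {dA dB : ℕ} {L : Type*} [Fintype L]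
    (K : L → Matrix (Fin dB) (Fin dA) ℂ) :
    Matrix (Fin dA × Fin dB) (Fin dA × Fin dB) ℂ :=
  ∑ l, ((1 : Matrix (Fin dA) (Fin dA) ℂ) ⊗ₖ K l) * maxEnt dA *
    ((1 : Matrix (Fin dA) (Fin dA) ℂ) ⊗ₖ K l)ᴴ

lemma kron_conjT {m n p q : Type*} [Fintype m] [Fintype n] [Fintype p] [Fintype q]
    [DecidableEq m] [DecidableEq p]
    (A : Matrix m n ℂ) (B : Matrix p q ℂ) : (A ⊗ₖ B)ᴴ = Aᴴ ⊗ₖ Bᴴ := by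
  ext ⟨i,j⟩ ⟨k,l⟩
  simp [Matrix.conjTranspose_apply, Matrix.kroneckerMap_apply, star_mul']

lemma trace_maxEnt_kron {d : ℕ} (A B : Matrix (Fin d) (Fin d) ℂ) :
    (maxEnt d * (A ⊗ₖ B)).trace = (d:ℂ)⁻¹ * (Aᵀ * B).trace := by
  simp only [Matrix.trace, Matrix.diag, Matrix.mul_apply, maxEnt,
    Matrix.kroneckerMap_apply, Matrix.transpose_apply, Fintype.sum_prod_type,
    ite_mul, zero_mul, Finset.mul_sum]
  rw [Finset.sum_comm]
  simp only [ite_and]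
  simp [Finset.sum_ite_eq, Finset.sum_ite_eq', mul_comm, mul_left_comm]

lemma trace_sandwich {da db : ℕ} (M : Matrix (Fin db) (Fin da) ℂ)
    (A : Matrix (Fin da) (Fin da) ℂ) (B : Matrix (Fin db) (Fin db) ℂ) :
    (((1 : Matrix (Fin da) (Fin da) ℂ) ⊗ₖ M) * maxEnt da *
      ((1 : Matrix (Fin da) (Fin da) ℂ) ⊗ₖ M)ᴴ * (A ⊗ₖ B)).trace
      = (da:ℂ)⁻¹ * (Aᵀ * (Mᴴ * B * M)).trace := by
  rw [kron_conjT, conjTranspose_one]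
  have h1 : ((1 : Matrix (Fin da) (Fin da) ℂ) ⊗ₖ M) * maxEnt da *
      ((1 : Matrix (Fin da) (Fin da) ℂ) ⊗ₖ Mᴴ) * (A ⊗ₖ B)
      = ((1 : Matrix (Fin da) (Fin da) ℂ) ⊗ₖ M) *
        (maxEnt da * (((1 : Matrix (Fin da) (Fin da) ℂ) ⊗ₖ Mᴴ) * (A ⊗ₖ B))) := by
    simp [Matrix.mul_assoc]
  rw [h1, Matrix.trace_mul_comm, Matrix.mul_assoc, Matrix.mul_assoc,
    ← Matrix.mul_kronecker_mul, ← Matrix.mul_kronecker_mul, one_mul, mul_one,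
    trace_maxEnt_kron]
  ring_nf
  rw [Matrix.mul_assoc]

/-- Completeness of the MDI characterization of quantum memories:
(i) `P(i|τ,ω) = tr[(I⊗V_i)Φ₊(I⊗V_i)† (N(τ)⊗ω)] = (d_A/d_B) tr[J_N (τᵀ ⊗ (V_i† ω V_i)ᵀ)]`;
(ii) if `W = Σ_{s,t} β^i_{s,t} τ_sᵀ ⊗ (V_i† ω_t V_i)ᵀ` for every `i`, then
`Σ_{i,s,t} β^i_{s,t} P(i|τ_s,ω_t) = d_A d_B tr(W J_N)`. -/
theorem mdi_memory_completeness {dA dB : ℕ} {L : Type*} [Fintype L]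
    (K : L → Matrix (Fin dB) (Fin dA) ℂ) (hK : ∑ l, (K l)ᴴ * K l = 1)
    (V : Fin (dB ^ 2) → Matrix (Fin dB) (Fin dB) ℂ)
    (hV : ∀ i, (V i)ᴴ * V i = 1)
    (horth : ∀ i j, ((V i)ᴴ * V j).trace = if i = j then (dB : ℂ) else 0) :
    (∀ τ : Matrix (Fin dA) (Fin dA) ℂ, IsDensity τ →
      ∀ ω : Matrix (Fin dB) (Fin dB) ℂ, IsDensity ω →
      ∀ i, (bellProj (V i) * ((∑ l, K l * τ * (K l)ᴴ) ⊗ₖ ω)).trace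
        = (dA : ℂ) / (dB : ℂ) *
          (choiState K * (τᵀ ⊗ₖ ((V i)ᴴ * ω * V i)ᵀ)).trace) ∧
    (∀ W : Matrix (Fin dA × Fin dB) (Fin dA × Fin dB) ℂ, W.IsHermitian →
      ∀ τ : Fin (dA ^ 2) → Matrix (Fin dA) (Fin dA) ℂ, (∀ s, IsDensity (τ s)) →
      ∀ ω : Fin (dB ^ 2) → Matrix (Fin dB) (Fin dB) ℂ, (∀ t, IsDensity (ω t)) →
      ∀ β : Fin (dB ^ 2) → Fin (dA ^ 2) → Fin (dB ^ 2) → ℝ,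
      (∀ i, W = ∑ s, ∑ t, (β i s t : ℂ) • ((τ s)ᵀ ⊗ₖ ((V i)ᴴ * ω t * V i)ᵀ)) →
      ∑ i, ∑ s, ∑ t, (β i s t : ℂ) *
          (bellProj (V i) * ((∑ l, K l * τ s * (K l)ᴴ) ⊗ₖ ω t)).trace
        = (dA : ℂ) * (dB : ℂ) * (W * choiState K).trace) := by
  have part1 : ∀ τ : Matrix (Fin dA) (Fin dA) ℂ, IsDensity τ →
      ∀ ω : Matrix (Fin dB) (Fin dB) ℂ, IsDensity ω →
      ∀ i, (bellProj (V i) * ((∑ l, K l * τ * (K l)ᴴ) ⊗ₖ ω)).trace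
        = (dA : ℂ) / (dB : ℂ) *
          (choiState K * (τᵀ ⊗ₖ ((V i)ᴴ * ω * V i)ᵀ)).trace := by
    intro τ hτ ω hω i
    have hdA : (dA : ℂ) ≠ 0 := by
      intro h
      have h0 : dA = 0 := by exact_mod_cast h
      subst h0
      have := hτ.2
      simp [Matrix.trace] at this
    have hdB : (dB : ℂ) ≠ 0 := by
      intro h
      have h0 : dB = 0 := by exact_mod_cast h
      subst h0
      have := hω.2
      simp [Matrix.trace] at this
    rw [bellProj, trace_sandwich, choiState, Matrix.sum_mul, Matrix.trace_sum]
    simp only [trace_sandwich]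
    set X := (V i)ᴴ * ω * V i with hX
    have htr : ((∑ l, K l * τ * (K l)ᴴ)ᵀ * X).trace
        = ∑ l, (τᵀᵀ * ((K l)ᴴ * Xᵀ * K l)).trace := by
      rw [Matrix.transpose_sum, Matrix.sum_mul, Matrix.trace_sum]
      refine Finset.sum_congr rfl fun l _ => ?_
      rw [Matrix.transpose_transpose, ← Matrix.trace_transpose,
        Matrix.transpose_mul, Matrix.transpose_transpose]
      rw [show Xᵀ * (K l * τ * (K l)ᴴ) = (Xᵀ * K l) * τ * (K l)ᴴ by
        simp [Matrix.mul_assoc]]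
      rw [Matrix.trace_mul_cycle, Matrix.trace_mul_comm]
      simp [Matrix.mul_assoc]
    rw [htr, Finset.mul_sum, Finset.mul_sum]
    refine Finset.sum_congr rfl fun l _ => ?_
    field_simp
  refine ⟨part1, ?_⟩
  intro W hW τ hτ ω hω β hβ
  rcases Nat.eq_zero_or_pos dA with h0 | hApos
  · subst h0; simp
  rcases Nat.eq_zero_or_pos dB with h0 | hBpos
  · subst h0; simp
  have hdB : (dB : ℂ) ≠ 0 := Nat.cast_ne_zero.mpr hBpos.ne'
  have step2 : ∀ i, ∑ s, ∑ t, (β i s t : ℂ) *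
      (bellProj (V i) * ((∑ l, K l * τ s * (K l)ᴴ) ⊗ₖ ω t)).trace
      = (dA : ℂ) / (dB : ℂ) * (choiState K * W).trace := by
    intro i
    have hw : (choiState K * W).trace = ∑ s, ∑ t, (β i s t : ℂ) *
        (choiState K * ((τ s)ᵀ ⊗ₖ ((V i)ᴴ * ω t * V i)ᵀ)).trace := by
      conv_lhs => rw [hβ i]
      rw [Matrix.mul_sum, Matrix.trace_sum]
      refine Finset.sum_congr rfl fun s _ => ?_
      rw [Matrix.mul_sum, Matrix.trace_sum]
      refine Finset.sum_congr rfl fun t _ => ?_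
      rw [Matrix.mul_smul, Matrix.trace_smul, smul_eq_mul]
    rw [hw, Finset.mul_sum]
    refine Finset.sum_congr rfl fun s _ => ?_
    rw [Finset.mul_sum]
    refine Finset.sum_congr rfl fun t _ => ?_
    rw [part1 (τ s) (hτ s) (ω t) (hω t) i]
    ring
  rw [Finset.sum_congr rfl fun i _ => step2 i, Finset.sum_const,
    Finset.card_univ, Fintype.card_fin, nsmul_eq_mul,
    Matrix.trace_mul_comm (choiState K) W]
  push_cast
  field_simp
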